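/- arXiv:2501.12127 — 5 statements merged into one kernel-verified Lean document; each statement's English description precedes it below -/
import Mathlib

section
/- Let L/K be a finite Galois extension whose Galois group is cyclic of order r with generator σ, let d be a divisor of r, and let M be the fixed field of σ^d (so [M:K] = d). Then the K-algebra map M ⊗_K L → L^d given by x ⊗ y ↦ (σ^{-(i-1)}(x) · y)_{i=1}^{d} is an isomorphism of K-algebras, and under this isomorphism the automorphism id_M ⊗ σ of M ⊗_K L corresponds to the automorphism of L^d given by (x_1, x_2, …, x_d) ↦ (σ(x_2), σ(x_3), …, σ(x_d), σ(x_1)). -/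
open Module IntermediateField

set_option maxHeartbeats 1000000 in
set_option synthInstance.maxHeartbeats 200000 in
/-- For a cyclic Galois extension `L/K` of degree `r` with generator `σ` and
`M` the fixed field of `σ^d` (where `d ∣ r`), the `K`-algebra map
`M ⊗_K L → L^d`, `x ⊗ y ↦ (σ^{-(i-1)}(x)·y)_i`, is an isomorphism, and it
intertwines `id_M ⊗ σ` with `(x_1,…,x_d) ↦ (σ(x_2),…,σ(x_d),σ(x_1))`. -/
theorem fixedField_tensor_decomposition {K L : Type*} [Field K] [Field L]
    [Algebra K L] [FiniteDimensional K L] [IsGalois K L]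
    (r d : ℕ) [NeZero d] (hd : d ∣ r) (hr : Module.finrank K L = r)
    (σ : L ≃ₐ[K] L) (hgen : ∀ τ : L ≃ₐ[K] L, τ ∈ Subgroup.zpowers σ)
    (M : IntermediateField K L)
    (hM : M = IntermediateField.fixedField (Subgroup.zpowers (σ ^ d))) :
    let φ : TensorProduct K M L →ₐ[K] (Fin d → L) :=
      Algebra.TensorProduct.lift
        (Pi.algHom _ _ fun i : Fin d =>
          (((σ⁻¹ : L ≃ₐ[K] L) ^ (i : ℕ)).toAlgHom).comp M.val)
        (Pi.constAlgHom K (Fin d) L)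
        (fun _ _ => Commute.all _ _)
    Function.Bijective φ ∧
      ∀ z : TensorProduct K M L,
        φ ((Algebra.TensorProduct.map (AlgHom.id K M) σ.toAlgHom) z)
          = fun i : Fin d => σ (φ z (i + 1)) := by
  intro φ
  classical
  have hr0 : 0 < r := hr ▸ Module.finrank_pos
  have hd0 : 0 < d := Nat.pos_of_ne_zero (NeZero.ne d)
  have hord : orderOf σ = r := by
    rw [orderOf_eq_card_of_forall_mem_zpowers hgen,
      IsGalois.card_aut_eq_finrank, hr]
  -- elements of `zpowers (σ^d)` fix `M` pointwise
  have hfixall : ∀ (x : M) (g : L ≃ₐ[K] L), g ∈ Subgroup.zpowers (σ ^ d) → g (x : L) = x := by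
    intro x g hg
    have hx : (x : L) ∈ fixedField (Subgroup.zpowers (σ ^ d)) := hM ▸ x.2
    exact hx ⟨g, hg⟩
  -- the exponent of `σ⁻¹` acting on `M` only matters mod `d`
  have hshift : ∀ (m : ℕ) (x : M),
      ((σ⁻¹ : L ≃ₐ[K] L) ^ m) (x : L) = ((σ⁻¹ : L ≃ₐ[K] L) ^ (m % d)) (x : L) := by
    intro m x
    conv_lhs => rw [← Nat.mod_add_div m d]
    rw [pow_add, AlgEquiv.mul_apply]
    congr 1
    apply hfixall
    rw [pow_mul, inv_pow]
    exact Subgroup.pow_mem _ (Subgroup.inv_mem _ (Subgroup.mem_zpowers _)) _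
  have hfixing : M.fixingSubgroup = Subgroup.zpowers (σ ^ d) := by
    rw [hM]; exact fixingSubgroup_fixedField _
  -- the restrictions of `σ⁻¹ ^ i`, `i < d`, to `M` are pairwise distinct
  have key : ∀ i j : Fin d,
      (∀ x : M, ((σ⁻¹ : L ≃ₐ[K] L) ^ (i : ℕ)) (x : L) = ((σ⁻¹ : L ≃ₐ[K] L) ^ (j : ℕ)) (x : L)) →
      i = j := by
    intro i j hij
    have e : ∀ n : ℕ, ((σ⁻¹ : L ≃ₐ[K] L) ^ n) = σ ^ (-(n : ℤ)) := fun n => by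
      rw [zpow_neg, zpow_natCast, inv_pow]
    have hmem : σ ^ ((j : ℤ) - (i : ℤ)) ∈ M.fixingSubgroup := by
      rw [IntermediateField.mem_fixingSubgroup_iff]
      intro x hx
      have hx' := hij ⟨x, hx⟩
      rw [e, e] at hx'
      calc (σ ^ ((j : ℤ) - (i : ℤ))) x = (σ ^ (j : ℤ)) ((σ ^ (-(i : ℤ))) x) := by
            rw [← AlgEquiv.mul_apply, ← zpow_add, ← sub_eq_add_neg]
        _ = (σ ^ (j : ℤ)) ((σ ^ (-(j : ℤ))) x) := by rw [hx']
        _ = x := by rw [← AlgEquiv.mul_apply, ← zpow_add, add_neg_cancel, zpow_zero,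
            AlgEquiv.one_apply]
    rw [hfixing] at hmem
    obtain ⟨k, hk0⟩ := hmem
    have hk : (σ ^ d) ^ k = σ ^ ((j : ℤ) - (i : ℤ)) := hk0
    rw [← zpow_natCast σ d, ← zpow_mul, zpow_eq_zpow_iff_modEq, hord] at hk
    have h1 : (r : ℤ) ∣ ((j : ℤ) - (i : ℤ)) - (d : ℤ) * k := Int.ModEq.dvd hk
    have hdvd : (d : ℤ) ∣ ((j : ℤ) - (i : ℤ)) := by
      have h2 : (d : ℤ) ∣ (r : ℤ) := Int.natCast_dvd_natCast.mpr hd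
      have h3 := h2.trans h1
      have h4 : (d : ℤ) ∣ (d : ℤ) * k := Dvd.intro k rfl
      simpa using dvd_add h3 h4
    have h5 : (j : ℤ) - (i : ℤ) = 0 := Int.eq_zero_of_abs_lt_dvd hdvd
      (by
        have hi : ((i : ℕ) : ℤ) < d := by exact_mod_cast i.2
        have hj : ((j : ℕ) : ℤ) < d := by exact_mod_cast j.2
        rw [abs_sub_lt_iff]
        constructor <;> omega)
    exact Fin.ext (by omega)
  -- `finrank K M = d`
  have hdM : finrank K M = d := by
    have h1 : finrank M L = r / d := by
      rw [hM, finrank_fixedField_eq_card, Nat.card_zpowers,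
        orderOf_pow, hord, Nat.gcd_eq_right hd]
    have h2 : finrank K M * finrank M L = r := by
      rw [Module.finrank_mul_finrank K M L, hr]
    rw [h1] at h2
    have h3 : r = d * (r / d) := (Nat.mul_div_cancel' hd).symm
    have h4 : 0 < r / d := Nat.div_pos (Nat.le_of_dvd hr0 hd) hd0
    exact Nat.eq_of_mul_eq_mul_right h4 (h2.trans h3)
  let b : Basis (Fin d) K M := Module.finBasisOfFinrankEq K M hdM
  -- the matrix of the isomorphism over a basis of `M`
  let A : Matrix (Fin d) (Fin d) L :=
    Matrix.of fun i j => ((σ⁻¹ : L ≃ₐ[K] L) ^ (i : ℕ)) ((b j : M) : L)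
  -- Dedekind independence of characters
  let F : Fin d → (M →* L) := fun i =>
    ((((σ⁻¹ : L ≃ₐ[K] L) ^ (i : ℕ)).toAlgHom).comp M.val : M →ₐ[K] L)
  have hFapp : ∀ (i : Fin d) (x : M), F i x = ((σ⁻¹ : L ≃ₐ[K] L) ^ (i : ℕ)) (x : L) :=
    fun i x => rfl
  have hFinj : Function.Injective F := by
    intro i j hij
    exact key i j fun x => by
      rw [← hFapp i x, ← hFapp j x, hij]
  have li : LinearIndependent L (fun i : Fin d => ⇑(F i)) :=
    (linearIndependent_monoidHom M L).comp F hFinj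
  have hA : Function.Injective A.mulVec := by
    rw [Matrix.mulVec_injective_iff_isUnit, ← Matrix.linearIndependent_rows_iff_isUnit,
      Fintype.linearIndependent_iff]
    intro c hc
    have hcj : ∀ j, ∑ i, c i * A i j = 0 := by
      intro j
      have := congrFun hc j
      simpa [Finset.sum_apply, Pi.smul_apply, smul_eq_mul] using this
    apply Fintype.linearIndependent_iff.mp li c
    funext x
    have hFx : ∀ i : Fin d, F i x = ∑ j, b.repr x j • A i j := by
      intro i
      have h0 : F i x = ((((σ⁻¹ : L ≃ₐ[K] L) ^ (i : ℕ)).toAlgHom).comp M.val) x := rfl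
      rw [h0]
      conv_lhs => rw [← Basis.sum_repr b x]
      rw [map_sum]
      exact Finset.sum_congr rfl fun j _ => by rw [map_smul]; rfl
    calc (∑ i, c i • ⇑(F i)) x = ∑ i, c i * F i x := by
          simp [Finset.sum_apply, smul_eq_mul]
      _ = ∑ i, ∑ j, b.repr x j • (c i * A i j) := by
          refine Finset.sum_congr rfl fun i _ => ?_
          rw [hFx i, Finset.mul_sum]
          exact Finset.sum_congr rfl fun j _ => mul_smul_comm _ _ _
      _ = ∑ j, b.repr x j • (∑ i, c i * A i j) := by
          rw [Finset.sum_comm]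
          exact Finset.sum_congr rfl fun j _ => (Finset.smul_sum).symm
      _ = 0 := by simp [hcj]
  -- the key computation for `φ` on pure tensors
  have hφ : ∀ (x : M) (y : L),
      φ (x ⊗ₜ[K] y) = fun i : Fin d => ((σ⁻¹ : L ≃ₐ[K] L) ^ (i : ℕ)) (x : L) * y := by
    intro x y
    show Algebra.TensorProduct.lift _ _ _ (x ⊗ₜ[K] y) = _
    rw [Algebra.TensorProduct.lift_tmul]
    rfl
  -- injectivity
  have hinjφ : Function.Injective φ := by
    set commE := Algebra.TensorProduct.comm K L M with hcommE
    set ζ : TensorProduct K L M →ₐ[K] (Fin d → L) := φ.comp commE.toAlgHom with hζ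
    have hζapp : ∀ (y : L) (x : M), ζ (y ⊗ₜ[K] x) = φ (x ⊗ₜ[K] y) := by
      intro y x
      show φ (commE (y ⊗ₜ[K] x)) = _
      rw [hcommE, Algebra.TensorProduct.comm_tmul]
    have hinjζ : Function.Injective ζ := by
      rw [injective_iff_map_eq_zero]
      intro z hz
      set B := b.baseChange L with hB
      set y : Fin d → L := fun j => B.repr z j with hy
      have hAy : A.mulVec y = 0 := by
        have h1 : ζ z = ∑ j, fun i : Fin d => A i j * y j := by
          conv_lhs => rw [← Basis.sum_repr B z]
          rw [map_sum]
          refine Finset.sum_congr rfl fun j _ => ?_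
          have e1 : B.repr z j • B j = (y j) ⊗ₜ[K] (b j) := by
            rw [hB, Basis.baseChange_apply, TensorProduct.smul_tmul', smul_eq_mul, mul_one]
          rw [e1, hζapp, hφ]
          rfl
        funext i
        calc A.mulVec y i = ∑ j, A i j * y j := rfl
          _ = (∑ j, fun i : Fin d => A i j * y j) i := by rw [Finset.sum_apply]
          _ = ζ z i := by rw [h1]
          _ = 0 := by rw [hz]; rfl
      have hy0 : y = 0 := hA (by rw [hAy, Matrix.mulVec_zero])
      have hrepr0 : B.repr z = 0 := by
        ext j
        exact congrFun hy0 j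
      simpa using (LinearEquiv.map_eq_zero_iff B.repr).mp hrepr0
    have hcomp : ∀ w, φ w = ζ (commE.symm w) := by
      intro w
      show φ w = φ (commE (commE.symm w))
      rw [AlgEquiv.apply_symm_apply]
    intro a b hab
    have h2 : ζ (commE.symm a) = ζ (commE.symm b) := by rw [← hcomp, ← hcomp, hab]
    have h3 := hinjζ h2
    exact commE.symm.injective h3
  -- surjectivity via dimension count
  have heq : finrank K (TensorProduct K M L) = finrank K (Fin d → L) := by
    rw [Module.finrank_tensorProduct, hdM, hr, Module.finrank_pi_fintype]
    simp [hr, Finset.sum_const, mul_comm]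
  have hsurjφ : Function.Surjective φ :=
    (LinearMap.injective_iff_surjective_of_finrank_eq_finrank (f := φ.toLinearMap) heq).mp hinjφ
  refine ⟨⟨hinjφ, hsurjφ⟩, ?_⟩
  -- the intertwining property
  have hσσ : ∀ w : L, σ (σ⁻¹ w) = w := fun w => by
    rw [← AlgEquiv.mul_apply, mul_inv_cancel, AlgEquiv.one_apply]
  intro z
  induction z using TensorProduct.induction_on with
  | zero =>
    funext i
    simp
  | tmul x y =>
    simp only [Algebra.TensorProduct.map_tmul, AlgHom.coe_id, id_eq,
      AlgEquiv.toAlgHom_eq_coe, AlgHom.coe_coe]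
    simp only [hφ]
    funext i
    rw [map_mul]
    congr 1
    have hval : (((i + 1 : Fin d) : ℕ)) % d = ((i : ℕ) + 1) % d := by
      rw [Fin.add_def, Fin.val_one', Nat.mod_mod_of_dvd _ dvd_rfl, Nat.add_mod,
        Nat.mod_mod_of_dvd _ dvd_rfl, ← Nat.add_mod]
    have h6 : ((σ⁻¹ : L ≃ₐ[K] L) ^ (((i + 1 : Fin d)) : ℕ)) (x : L)
        = ((σ⁻¹ : L ≃ₐ[K] L) ^ ((i : ℕ) + 1)) (x : L) := by
      rw [hshift (((i + 1 : Fin d)) : ℕ) x, hval, ← hshift]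
    rw [h6, pow_succ', AlgEquiv.mul_apply, hσσ]
  | add u v hu hv =>
    rw [map_add (Algebra.TensorProduct.map (AlgHom.id K M) σ.toAlgHom) u v,
      map_add φ, hu, hv]
    funext i
    simp only [Pi.add_apply, map_add φ, map_add σ]
end

section
/- Let n, t, d̃, m, r be positive integers with n = t·d̃, let a be an integer coprime to d̃, and let a_1, …, a_m be odd integers such that n divides a·t + r·(a_1 + ⋯ + a_m). Then either r is even, or m·(n−1) − (n−t) is even. (In particular, (−1)^{m(n−1)} and (−1)^{n−t} differ at most by a factor of (−1)^r-type ambiguity, i.e., by an r-th root of unity.) -/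
/-- Parity lemma: if `n = t·d̃`, `a` is coprime to `d̃`, all `a_i` are odd and
`n ∣ a·t + r·(a_1 + ⋯ + a_m)`, then either `r` is even or `m·(n−1) − (n−t)` is
even. -/
theorem parity_sign_comparison (n t dt m r : ℕ)
    (hn : 0 < n) (ht : 0 < t) (hdt : 0 < dt) (hm : 0 < m) (hr : 0 < r)
    (hfact : n = t * dt) (a : ℤ) (ha : IsCoprime a (dt : ℤ))
    (A : Fin m → ℤ) (hA : ∀ i, Odd (A i))
    (hdvd : (n : ℤ) ∣ a * (t : ℤ) + (r : ℤ) * ∑ i, A i) :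
    Even r ∨ Even ((m : ℤ) * ((n : ℤ) - 1) - ((n : ℤ) - (t : ℤ))) := by
  -- parity of the sum: ∑ A i ≡ m (mod 2)
  have hsum : Even ((∑ i, A i) - (m : ℤ)) := by
    have h1 : (∑ i : Fin m, A i) - (m : ℤ) = ∑ i : Fin m, (A i - 1) := by
      rw [Finset.sum_sub_distrib]
      simp
    rw [h1]
    exact Finset.even_sum _ fun i _ => (hA i).sub_odd odd_one
  rcases Nat.even_or_odd n with hne | hno
  · -- n even
    rcases Nat.even_or_odd r with hre | hro
    · exact Or.inl hre
    right
    -- key: Even t ↔ Even m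
    have h2 : Even (a * (t : ℤ) + (r : ℤ) * ∑ i, A i) := by
      rcases hdvd with ⟨c, hc⟩
      rw [hc]
      exact (Int.even_coe_nat n).mpr hne |>.mul_right c
    have hS : (Even (∑ i, A i) ↔ Even (m : ℤ)) := by
      constructor
      · intro h; have := h.sub hsum; simpa using this
      · intro h; have := hsum.add h; simpa using this
    have hat : Even (a * (t : ℤ)) ↔ Even (t : ℤ) := by
      rcases Int.even_or_odd a with hae | hao
      · -- a even ⇒ dt odd ⇒ t even
        have hdto : ¬ Even (dt : ℤ) := by
          intro hdte
          have h2a : (2 : ℤ) ∣ a := hae.two_dvd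
          have h2d : (2 : ℤ) ∣ (dt : ℤ) := hdte.two_dvd
          have := IsCoprime.isUnit_of_dvd' ha h2a h2d
          simpa using Int.isUnit_iff.mp this
        have hte : Even (t : ℤ) := by
          have : Even ((t : ℤ) * (dt : ℤ)) := by
            have : ((n : ℤ)) = (t : ℤ) * (dt : ℤ) := by exact_mod_cast hfact
            rw [← this]; exact (Int.even_coe_nat n).mpr hne
          rcases Int.even_mul.mp this with h | h
          · exact h
          · exact absurd h hdto
        simp [hae.mul_right, hte]
      · rw [Int.even_mul]
        simp [Int.not_even_iff_odd.mpr hao]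
    have hrS : Even ((r : ℤ) * ∑ i, A i) ↔ Even (∑ i, A i) := by
      rw [Int.even_mul]
      have : ¬ Even (r : ℤ) := by
        rw [Int.even_coe_nat]; exact Nat.not_even_iff_odd.mpr hro
      simp [this]
    have hkey : Even (t : ℤ) ↔ Even (m : ℤ) := by
      have := Int.even_add.mp h2
      rw [hat, hrS, hS] at this
      exact this
    have hnE : Even (n : ℤ) := (Int.even_coe_nat n).mpr hne
    have hn1 : ¬ Even ((n : ℤ) - 1) := by
      rw [Int.even_sub]
      simp [hnE]
    have hgoal1 : Even ((m : ℤ) * ((n : ℤ) - 1)) ↔ Even (m : ℤ) := by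
      rw [Int.even_mul]; simp [hn1]
    have hgoal2 : Even ((n : ℤ) - (t : ℤ)) ↔ Even (t : ℤ) := by
      rw [Int.even_sub]; simp [hnE]
    rw [Int.even_sub, hgoal1, hgoal2]
    exact hkey.symm
  · -- n odd: both terms even
    right
    have hto : Odd t := (Nat.odd_mul.mp (hfact ▸ hno)).1
    have h1 : Even ((m : ℤ) * ((n : ℤ) - 1)) := by
      apply Even.mul_left
      rw [Int.even_sub]
      simp [Int.even_coe_nat, Nat.not_even_iff_odd.mpr hno]
    have h2 : Even ((n : ℤ) - (t : ℤ)) := by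
      rw [Int.even_sub]
      simp [Int.even_coe_nat, Nat.not_even_iff_odd.mpr hno, Nat.not_even_iff_odd.mpr hto]
    exact h1.sub h2
end

section
/- Let V be a finite-dimensional vector space over a field k, let d ≥ 1, and let A_1, …, A_d be linear endomorphisms of V. Let T be the unique linear endomorphism of the d-fold tensor power V^{⊗d} satisfying T(v_1 ⊗ v_2 ⊗ ⋯ ⊗ v_d) = A_1 v_2 ⊗ A_2 v_3 ⊗ ⋯ ⊗ A_{d-1} v_d ⊗ A_d v_1 for all v_1, …, v_d ∈ V. Then the trace of T equals the trace of the composite A_1 ∘ A_2 ∘ ⋯ ∘ A_d on V. -/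
open TensorProduct PiTensorProduct LinearMap Module

section TwistEnd

variable {k V : Type*} [CommSemiring k] [AddCommMonoid V] [Module k V]

/-- The twisted cyclic shift endomorphism of `V^{⊗ d}` determined by a family of
endomorphisms `A i`. -/
noncomputable def twistEnd (d : ℕ) [NeZero d] (A : Fin d → Module.End k V) :
    Module.End k (⨂[k] (_ : Fin d), V) :=
  PiTensorProduct.lift
    (((PiTensorProduct.tprod k).compLinearMap A).domDomCongr (Equiv.addRight (1 : Fin d)))

lemma twistEnd_tprod (d : ℕ) [NeZero d] (A : Fin d → Module.End k V) (v : Fin d → V) :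
    twistEnd d A (PiTensorProduct.tprod k v)
      = PiTensorProduct.tprod k fun i => A i (v (i + 1)) := by
  simp [twistEnd]

lemma update_comp_shift (d : ℕ) [NeZero d] [DecidableEq (Fin d)] (A : Fin d → Module.End k V) (j : Fin d)
    (B : Module.End k V) (v : Fin d → V) :
    (fun i => Function.update A j B i (v (i + 1)))
      = Function.update (fun i => A i (v (i + 1))) j (B (v (j + 1))) := by
  funext i
  rcases eq_or_ne i j with rfl | h
  · simp
  · simp [Function.update_of_ne h]

end TwistEnd

section FieldCase

variable {k V : Type*} [Field k] [AddCommGroup V] [Module k V] [FiniteDimensional k V]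

instance piTensorFin_free (m : ℕ) : Module.Free k (⨂[k] (_ : Fin m), V) := by
  induction m with
  | zero => exact Module.Free.of_equiv (PiTensorProduct.isEmptyEquiv (Fin 0)).symm
  | succ m ih =>
    have e : (V ⊗[k] (⨂[k] (_ : Fin m), V)) ≃ₗ[k] (⨂[k] (_ : Fin (m + 1)), V) :=
      (TensorProduct.congr (PiTensorProduct.subsingletonEquiv (0 : Fin 1)).symm
          (LinearEquiv.refl _ _)).trans
        ((PiTensorProduct.tmulEquiv k V).trans
          (PiTensorProduct.reindex k (fun _ => V)
            (finSumFinEquiv.trans (finCongr (Nat.add_comm 1 m)))))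
    exact Module.Free.of_equiv e

instance piTensorFin_finite (m : ℕ) : Module.Finite k (⨂[k] (_ : Fin m), V) := by
  induction m with
  | zero => exact Module.Finite.equiv (PiTensorProduct.isEmptyEquiv (Fin 0)).symm
  | succ m ih =>
    have e : (V ⊗[k] (⨂[k] (_ : Fin m), V)) ≃ₗ[k] (⨂[k] (_ : Fin (m + 1)), V) :=
      (TensorProduct.congr (PiTensorProduct.subsingletonEquiv (0 : Fin 1)).symm
          (LinearEquiv.refl _ _)).trans
        ((PiTensorProduct.tmulEquiv k V).trans
          (PiTensorProduct.reindex k (fun _ => V)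
            (finSumFinEquiv.trans (finCongr (Nat.add_comm 1 m)))))
    exact Module.Finite.equiv e

omit [FiniteDimensional k V] in
lemma dualTensorHom_mul_dualTensorHom (a g : Module.Dual k V) (x y : V) :
    dualTensorHom k V V (a ⊗ₜ[k] x) * dualTensorHom k V V (g ⊗ₜ[k] y)
      = a y • dualTensorHom k V V (g ⊗ₜ[k] x) := by
  ext z
  simp [Module.End.mul_apply, dualTensorHom_apply, smul_smul, mul_comm]

omit [FiniteDimensional k V] in
lemma list_prod_rank_ones (m : ℕ) (f : Fin (m + 1) → Module.Dual k V) (w : Fin (m + 1) → V) :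
    (List.ofFn fun i => dualTensorHom k V V (f i ⊗ₜ[k] w i)).prod
      = (∏ i : Fin m, f i.castSucc (w i.succ)) •
          dualTensorHom k V V (f (Fin.last m) ⊗ₜ[k] w 0) := by
  induction m with
  | zero => simp
  | succ m ih =>
    rw [List.ofFn_succ, List.prod_cons, ih (fun i => f i.succ) (fun i => w i.succ),
      mul_smul_comm, dualTensorHom_mul_dualTensorHom, Fin.succ_last, smul_smul]
    congr 1
    rw [Fin.prod_univ_succ]
    simp only [Fin.castSucc_zero, Fin.succ_castSucc]
    ring

lemma trace_list_prod_rank_ones (m : ℕ) (f : Fin (m + 1) → Module.Dual k V)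
    (w : Fin (m + 1) → V) :
    LinearMap.trace k V (List.ofFn fun i => dualTensorHom k V V (f i ⊗ₜ[k] w i)).prod
      = ∏ i : Fin (m + 1), f i (w (i + 1)) := by
  rw [list_prod_rank_ones, map_smul, LinearMap.trace_eq_contract_apply, contractLeft_apply,
    Fin.prod_univ_castSucc, smul_eq_mul]
  congr 1
  · apply Finset.prod_congr rfl
    intro i _
    rw [Fin.coeSucc_eq_succ]
  · rw [Fin.last_add_one]

lemma trace_twistEnd_rank_ones (m : ℕ) (f : Fin (m + 1) → Module.Dual k V)
    (w : Fin (m + 1) → V) :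
    LinearMap.trace k _ (twistEnd (m + 1) fun i => dualTensorHom k V V (f i ⊗ₜ[k] w i))
      = ∏ i : Fin (m + 1), f i (w (i + 1)) := by
  set F : Module.Dual k (⨂[k] (_ : Fin (m + 1)), V) :=
    PiTensorProduct.lift
      (((MultilinearMap.mkPiAlgebra k (Fin (m + 1)) k).compLinearMap f).domDomCongr
        (Equiv.addRight (1 : Fin (m + 1)))) with hFdef
  have hF : ∀ u : Fin (m + 1) → V,
      F (PiTensorProduct.tprod k u) = ∏ i : Fin (m + 1), f i (u (i + 1)) := by
    intro u
    simp [hFdef]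
  have key : (twistEnd (m + 1) fun i => dualTensorHom k V V (f i ⊗ₜ[k] w i))
      = dualTensorHom k (⨂[k] (_ : Fin (m + 1)), V) (⨂[k] (_ : Fin (m + 1)), V)
          (F ⊗ₜ[k] PiTensorProduct.tprod k w) := by
    apply PiTensorProduct.ext
    ext u
    simp only [LinearMap.compMultilinearMap_apply, twistEnd_tprod, dualTensorHom_apply, hF]
    exact MultilinearMap.map_smul_univ _ _ _
  rw [key, LinearMap.trace_eq_contract_apply, contractLeft_apply, hF]

end FieldCase

/-- Trace of a twisted cyclic shift: if `T` acts on `V^{⊗d}` by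
`T(v_1 ⊗ ⋯ ⊗ v_d) = A_1 v_2 ⊗ A_2 v_3 ⊗ ⋯ ⊗ A_{d-1} v_d ⊗ A_d v_1`, then
`tr T = tr (A_1 ∘ A_2 ∘ ⋯ ∘ A_d)`. -/
theorem trace_twisted_cyclic_shift {k V : Type*} [Field k] [AddCommGroup V]
    [Module k V] [FiniteDimensional k V] (d : ℕ) [NeZero d]
    (A : Fin d → Module.End k V)
    (T : Module.End k (PiTensorProduct k fun _ : Fin d => V))
    (hT : ∀ v : Fin d → V,
      T (PiTensorProduct.tprod k v)
        = PiTensorProduct.tprod k fun i => A i (v (i + 1))) :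
    LinearMap.trace k _ T = LinearMap.trace k V (List.ofFn A).prod := by
  obtain ⟨m, rfl⟩ : ∃ m, d = m + 1 :=
    ⟨d - 1, (Nat.succ_pred_eq_of_ne_zero (NeZero.ne d)).symm⟩
  have hT' : T = twistEnd (m + 1) A := by
    apply PiTensorProduct.ext
    ext v
    rw [LinearMap.compMultilinearMap_apply, LinearMap.compMultilinearMap_apply, hT v,
      twistEnd_tprod]
  -- the two sides as multilinear maps in `A`
  let Φ : MultilinearMap k (fun _ : Fin (m + 1) => Module.End k V) k :=
    { toFun := fun B => LinearMap.trace k _ (twistEnd (m + 1) B)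
      map_update_add' := by
        intro _ B j x y
        rw [← map_add]
        congr 1
        apply PiTensorProduct.ext
        ext v
        rw [LinearMap.compMultilinearMap_apply, LinearMap.compMultilinearMap_apply,
          LinearMap.add_apply, twistEnd_tprod, twistEnd_tprod, twistEnd_tprod,
          update_comp_shift, update_comp_shift, update_comp_shift, LinearMap.add_apply,
          MultilinearMap.map_update_add]
      map_update_smul' := by
        intro _ B j c x
        rw [← map_smul]
        congr 1
        apply PiTensorProduct.ext
        ext v
        rw [LinearMap.compMultilinearMap_apply, LinearMap.compMultilinearMap_apply,
          LinearMap.smul_apply, twistEnd_tprod, twistEnd_tprod,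
          update_comp_shift, update_comp_shift, LinearMap.smul_apply,
          MultilinearMap.map_update_smul] }
  let Ψ : MultilinearMap k (fun _ : Fin (m + 1) => Module.End k V) k :=
    (LinearMap.trace k V).compMultilinearMap
      (MultilinearMap.mkPiAlgebraFin k (m + 1) (Module.End k V))
  let b := Module.finBasis k V
  let bE : Basis ((Fin (Module.finrank k V)) × (Fin (Module.finrank k V))) k
      (Module.End k V) :=
    (b.dualBasis.tensorProduct b).map (dualTensorHomEquivOfBasis b)
  have hbE : ∀ q, bE q = dualTensorHom k V V (b.dualBasis q.1 ⊗ₜ[k] b q.2) := by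
    intro q
    simp [bE, Basis.tensorProduct_apply', dualTensorHomEquivOfBasis_apply]
  have key : Φ = Ψ := by
    apply Basis.ext_multilinear (fun _ => bE)
    intro p
    show LinearMap.trace k _ (twistEnd (m + 1) fun i => bE (p i))
        = LinearMap.trace k V (List.ofFn fun i => bE (p i)).prod
    simp only [hbE]
    rw [trace_twistEnd_rank_ones m (fun i => b.dualBasis (p i).1) (fun i => b (p i).2),
      trace_list_prod_rank_ones m (fun i => b.dualBasis (p i).1) (fun i => b (p i).2)]
  have := DFunLike.congr_fun key A
  simp only [Φ, Ψ, MultilinearMap.coe_mk, LinearMap.compMultilinearMap_apply,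
    MultilinearMap.mkPiAlgebraFin_apply] at this
  rw [hT', this]
end

section
/- Let G be a group, H a subgroup, and N a normal subgroup of G such that N·H = G. Let k be a commutative ring and V a k[H]-module. Realize the induced module Ind_H^G V as the k-module of functions f : G → V satisfying f(h·g) = h·f(g) for all h ∈ H, g ∈ G, with G acting by (g·f)(x) = f(x·g). Then evaluation at the identity induces a k-module isomorphism from the N-invariants (Ind_H^G V)^N onto the (N ∩ H)-invariants V^{N∩H}. -/
section

variable {k G V : Type*} [CommRing k] [Group G] [AddCommGroup V] [Module k V]
  (H N : Subgroup G) (ρ : Representation k H V)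

/-- The induced module `Ind_H^G V`, realized as the `k`-module of functions
`f : G → V` with `f(h·g) = h·f(g)`, with `G` acting by `(g·f)(x) = f(x·g)`. -/
def inducedModule : Submodule k (G → V) where
  carrier := {f | ∀ (h : H) (g : G), f (↑h * g) = ρ h (f g)}
  add_mem' {a b} ha hb := by
    intro h g
    simp only [Pi.add_apply, ha h g, hb h g, map_add]
  zero_mem' := by
    intro h g
    simp
  smul_mem' c a ha := by
    intro h g
    simp only [Pi.smul_apply, ha h g, map_smul]

/-- The `N`-invariants of the induced module, for the right-translation action
of `G`: those `f` with `f(x·n) = f(x)` for all `n ∈ N`. -/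
def inducedModuleInvariants : Submodule k (G → V) where
  carrier := {f | f ∈ inducedModule H ρ ∧ ∀ (n : N) (x : G), f (x * ↑n) = f x}
  add_mem' {a b} ha hb :=
    ⟨(inducedModule H ρ).add_mem ha.1 hb.1, by
      intro n x; simp only [Pi.add_apply, ha.2 n x, hb.2 n x]⟩
  zero_mem' := ⟨(inducedModule H ρ).zero_mem, by intro n x; simp⟩
  smul_mem' c a ha :=
    ⟨(inducedModule H ρ).smul_mem c ha.1, by
      intro n x; simp only [Pi.smul_apply, ha.2 n x]⟩

/-- The `(N ∩ H)`-invariants of `V`. -/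
def repInvariants : Submodule k V where
  carrier := {v | ∀ h : H, (h : G) ∈ N → ρ h v = v}
  add_mem' {a b} ha hb := by
    intro h hh
    simp only [map_add, ha h hh, hb h hh]
  zero_mem' := by intro h hh; simp
  smul_mem' c a ha := by
    intro h hh
    simp only [map_smul, ha h hh]

lemma repInv_eq [N.Normal] {v : V} (hv : v ∈ repInvariants H N ρ)
    {h1 h2 : H} {n1 n2 : G} (hn1 : n1 ∈ N) (hn2 : n2 ∈ N)
    (heq : n1 * (h1 : G) = n2 * (h2 : G)) : ρ h1 v = ρ h2 v := by
  have h12 : (h1 : G) * (h2 : G)⁻¹ ∈ N := by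
    have h' : (h1 : G) * (h2 : G)⁻¹ = n1⁻¹ * n2 := by
      have := congrArg (fun x => n1⁻¹ * x * (h2 : G)⁻¹) heq
      simpa [mul_assoc] using this
    rw [h']
    exact N.mul_mem (N.inv_mem hn1) hn2
  have hmem : ((h2⁻¹ * h1 : H) : G) ∈ N := by
    have := Subgroup.Normal.conj_mem' ‹N.Normal› _ h12 (h2 : G)
    simpa [mul_assoc] using this
  have : ρ h1 v = ρ (h2 * (h2⁻¹ * h1)) v := by
    congr 1
    group
  rw [this, map_mul, Module.End.mul_apply, hv _ hmem]

/-- If `N` is normal in `G` and `N·H = G`, then evaluation at the identity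
gives a `k`-module isomorphism `(Ind_H^G V)^N ≃ V^{N∩H}`. -/
theorem inducedInvariants_equiv_invariants [N.Normal]
    (hNH : ∀ g : G, ∃ n ∈ N, ∃ h ∈ H, g = n * h) :
    ∃ e : inducedModuleInvariants H N ρ ≃ₗ[k] repInvariants H N ρ,
      ∀ f : inducedModuleInvariants H N ρ, (e f : V) = (f : G → V) 1 := by
  classical
  choose n hn h hh heq using hNH
  -- evaluation at 1 lands in invariants
  have hval : ∀ f : inducedModuleInvariants H N ρ, (f : G → V) 1 ∈ repInvariants H N ρ := by
    rintro ⟨f, hf, hinv⟩ a ha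
    have h1 : f ((a : G) * 1) = ρ a (f 1) := hf a 1
    have h2 : f (1 * (a : G)) = f 1 := hinv ⟨a, ha⟩ 1
    rw [mul_one] at h1
    rw [one_mul] at h2
    rw [← h1, h2]
  -- the inverse map
  have hback : ∀ v : repInvariants H N ρ,
      (fun g => ρ ⟨h g, hh g⟩ (v : V)) ∈ inducedModuleInvariants H N ρ := by
    intro v
    constructor
    · intro a g
      have key : ρ (⟨h ((a : G) * g), hh _⟩ : H) (v : V)
          = ρ ((a : H) * ⟨h g, hh g⟩) (v : V) := by
        refine repInv_eq H N ρ v.2 (n1 := n ((a : G) * g))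
          (n2 := (a : G) * n g * (a : G)⁻¹) (hn _)
          (Subgroup.Normal.conj_mem ‹N.Normal› _ (hn g) a) ?_
        show n ((a : G) * g) * h ((a : G) * g) = (a : G) * n g * (a : G)⁻¹ * ((a : G) * h g)
        rw [← heq ((a : G) * g)]
        conv_lhs => rw [heq g]
        group
      simpa [map_mul, Module.End.mul_apply] using key
    · intro m x
      refine repInv_eq H N ρ v.2 (n1 := n (x * (m : G)))
        (n2 := n x * (h x * (m : G) * (h x)⁻¹)) (hn _)
        (N.mul_mem (hn x) (Subgroup.Normal.conj_mem ‹N.Normal› _ m.2 (h x))) ?_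
      show n (x * (m : G)) * h (x * (m : G)) = n x * (h x * (m : G) * (h x)⁻¹) * h x
      rw [← heq (x * (m : G))]
      conv_lhs => rw [heq x]
      group
  refine ⟨{ toFun := fun f => ⟨(f : G → V) 1, hval f⟩
            map_add' := fun a b => rfl
            map_smul' := fun c a => rfl
            invFun := fun v => ⟨fun g => ρ ⟨h g, hh g⟩ (v : V), hback v⟩
            left_inv := ?_
            right_inv := ?_ }, fun f => rfl⟩
  · rintro ⟨f, hf, hinv⟩
    ext g
    show ρ (⟨h g, hh g⟩ : H) (f 1) = f g
    have hmem : (h g)⁻¹ * n g * h g ∈ N :=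
      Subgroup.Normal.conj_mem' ‹N.Normal› _ (hn g) _
    have e2 : f g = f ((⟨h g, hh g⟩ : H) * ((h g)⁻¹ * n g * h g)) := by
      congr 1
      show g = h g * ((h g)⁻¹ * n g * h g)
      conv_lhs => rw [heq g]
      group
    rw [e2, hf ⟨h g, hh g⟩ _]
    congr 1
    have := hinv ⟨_, hmem⟩ 1
    simpa using this.symm
  · intro v
    ext
    show ρ (⟨h 1, hh 1⟩ : H) (v : V) = (v : V)
    have : ρ (⟨h 1, hh 1⟩ : H) (v : V) = ρ (1 : H) (v : V) :=
      repInv_eq H N ρ v.2 (n1 := n 1) (n2 := 1) (hn 1) N.one_mem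
        (by show n 1 * h 1 = 1 * 1; rw [← heq 1]; simp)
    simpa using this

end
end

section
/- Let L/K be a finite Galois extension of fields with Galois group Γ acting entrywise on matrices over L. Then every 1-cocycle c : Γ → GL_n(L) — that is, every function satisfying c(στ) = c(σ) · σ(c(τ)) for all σ, τ ∈ Γ — is a 1-coboundary: there exists A ∈ GL_n(L) such that c(σ) = A · σ(A)⁻¹ for all σ ∈ Γ. Equivalently, the nonabelian Galois cohomology set H¹(Γ, GL_n(L)) is trivial. -/
open Matrix Module Function

/-- Generalized Hilbert 90: for a finite Galois extension `L/K`, every 1-cocycle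
`c : Gal(L/K) → GL_n(L)` (with the entrywise Galois action on matrices) is a
coboundary: `c(σ) = A · σ(A)⁻¹` for some `A ∈ GL_n(L)`. -/
theorem hilbert90_GLn {K L : Type*} [Field K] [Field L] [Algebra K L]
    [FiniteDimensional K L] [IsGalois K L] (n : ℕ)
    (c : (L ≃ₐ[K] L) → (Matrix (Fin n) (Fin n) L)ˣ)
    (hc : ∀ σ τ : L ≃ₐ[K] L,
      (c (σ * τ) : Matrix (Fin n) (Fin n) L)
        = (c σ : Matrix (Fin n) (Fin n) L)
            * ((c τ : Matrix (Fin n) (Fin n) L)).map σ) :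
    ∃ A : (Matrix (Fin n) (Fin n) L)ˣ, ∀ σ : L ≃ₐ[K] L,
      (c σ : Matrix (Fin n) (Fin n) L)
        = (A : Matrix (Fin n) (Fin n) L)
            * ((↑A⁻¹ : Matrix (Fin n) (Fin n) L)).map σ := by
  classical
  -- c 1 = 1
  have hc1 : (c 1 : Matrix (Fin n) (Fin n) L) = 1 := by
    have h := hc 1 1
    rw [mul_one] at h
    have hmap : ((c 1 : Matrix (Fin n) (Fin n) L)).map (1 : L ≃ₐ[K] L) = (c 1 : Matrix (Fin n) (Fin n) L) := by
      ext i j; rfl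
    rw [hmap] at h
    have h2 : ((c 1)⁻¹ : (Matrix (Fin n) (Fin n) L)ˣ) * ((c 1) : Matrix (Fin n) (Fin n) L)
        = ((c 1)⁻¹ : (Matrix (Fin n) (Fin n) L)ˣ) * (((c 1) : Matrix (Fin n) (Fin n) L) * ((c 1) : Matrix (Fin n) (Fin n) L)) := by
      rw [← h]
    rw [Units.inv_mul, ← Matrix.mul_assoc, Units.inv_mul, Matrix.one_mul] at h2
    exact h2.symm
  have hmul : ∀ (σ : L ≃ₐ[K] L) (X Y : Matrix (Fin n) (Fin n) L),
      (X * Y).map ⇑σ = X.map ⇑σ * Y.map ⇑σ := by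
    intro σ X Y
    ext i j
    simp [Matrix.map_apply, Matrix.mul_apply, map_sum]
  -- Dedekind independence of automorphisms
  have indep : ∀ (lam : (L ≃ₐ[K] L) → L), (∀ y : L, ∑ τ : L ≃ₐ[K] L, lam τ * τ y = 0) →
      ∀ τ, lam τ = 0 := by
    intro lam hlam
    have li : LinearIndependent L (fun τ : L ≃ₐ[K] L => (τ : L → L)) := by
      refine (linearIndependent_monoidHom L L).comp
        (fun τ : L ≃ₐ[K] L => MonoidHomClass.toMonoidHom τ) ?_
      intro σ τ h
      ext a
      exact DFunLike.congr_fun h a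
    refine Fintype.linearIndependent_iff.mp li lam ?_
    funext y
    simpa [Finset.sum_apply] using hlam y
  -- the twisted sum map
  set b : (Fin n → L) → (Fin n → L) :=
    fun x => ∑ τ : L ≃ₐ[K] L, (c τ : Matrix (Fin n) (Fin n) L) *ᵥ fun i => τ (x i) with hb
  -- its range spans everything
  have hspan : Submodule.span L (Set.range b) = ⊤ := by
    by_contra hne
    obtain ⟨f, hf0, hfmap⟩ := Submodule.exists_dual_map_eq_bot_of_lt_top
      (lt_top_iff_ne_top.mpr hne) inferInstance
    have hfb : ∀ x, f (b x) = 0 := by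
      intro x
      have hx : f (b x) ∈ (Submodule.span L (Set.range b)).map f :=
        Submodule.mem_map_of_mem (Submodule.subset_span (Set.mem_range_self x))
      rw [hfmap] at hx
      exact hx
    have key : ∀ (i : Fin n) (τ : L ≃ₐ[K] L),
        f ((c τ : Matrix (Fin n) (Fin n) L) *ᵥ Pi.single i 1) = 0 := by
      intro i
      refine indep (fun τ => f ((c τ : Matrix (Fin n) (Fin n) L) *ᵥ Pi.single i 1)) ?_
      intro y
      have h := hfb (Pi.single i y)
      rw [hb] at h
      simp only at h
      have hsingle : ∀ τ : L ≃ₐ[K] L,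
          (fun j => τ ((Pi.single i y : Fin n → L) j)) = τ y • (Pi.single i 1 : Fin n → L) := by
        intro τ
        funext j
        by_cases hj : j = i
        · subst hj; simp
        · simp [Pi.single_apply, hj]
      rw [map_sum] at h
      rw [← h]
      refine Finset.sum_congr rfl fun τ _ => ?_
      simp [hsingle τ, Matrix.mulVec_smul, mul_comm]
    apply hf0
    have hfi : ∀ i : Fin n, f (Pi.single i 1) = 0 := by
      intro i
      have := key i 1
      rwa [hc1, Matrix.one_mulVec] at this
    refine LinearMap.ext fun x => ?_
    have hx : x = ∑ i : Fin n, x i • (Pi.single i 1 : Fin n → L) := by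
      funext j
      simp [Finset.sum_apply, Pi.single_apply]
    rw [hx]
    simp [hfi]
  -- pick a basis from the range of b
  obtain ⟨t, hts, htsp, hli⟩ := exists_linearIndependent L (Set.range b)
  rw [hspan] at htsp
  haveI : Fintype t := (hli.setFinite).fintype
  have hcard : Fintype.card t = n := by
    let bas : Basis t L (Fin n → L) := Basis.mk hli (by rw [Subtype.range_coe, htsp])
    have := Module.finrank_eq_card_basis bas
    rw [Module.finrank_fin_fun] at this
    exact this.symm
  let e : Fin n ≃ t := (Fintype.equivFinOfCardEq hcard).symm
  have hxs : ∀ j : Fin n, ∃ x : Fin n → L, b x = (e j : Fin n → L) :=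
    fun j => hts (e j).2
  choose xs hxs' using hxs
  set M : Matrix (Fin n) (Fin n) L := Matrix.of fun i j => xs j i with hM
  set A : Matrix (Fin n) (Fin n) L :=
    ∑ τ : L ≃ₐ[K] L, (c τ : Matrix (Fin n) (Fin n) L) * M.map τ with hA
  -- columns of A
  have hAcol : ∀ j : Fin n, A *ᵥ Pi.single j 1 = b (xs j) := by
    intro j
    rw [hA, hb]
    have : (∑ τ : L ≃ₐ[K] L, (c τ : Matrix (Fin n) (Fin n) L) * M.map τ) *ᵥ Pi.single j 1
        = ∑ τ : L ≃ₐ[K] L, ((c τ : Matrix (Fin n) (Fin n) L) * M.map τ) *ᵥ Pi.single j 1 := by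
      ext i
      simp only [Matrix.mulVec, dotProduct, Matrix.sum_apply, Finset.sum_apply,
        Finset.sum_mul]
      rw [Finset.sum_comm]
    rw [this]
    refine Finset.sum_congr rfl fun τ _ => ?_
    rw [← Matrix.mulVec_mulVec]
    have hcol : (M.map ⇑τ) *ᵥ Pi.single j 1 = fun i => τ (xs j i) := by
      funext i
      simp [Matrix.mulVec_single, hM]
    rw [hcol]
  -- A is invertible
  have hAunit : IsUnit A := by
    have hsurj : Function.Surjective A.mulVecLin := by
      rw [← LinearMap.range_eq_top]
      rw [← top_le_iff, ← htsp]
      rw [Submodule.span_le]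
      intro v hv
      obtain ⟨j, hj⟩ := e.surjective ⟨v, hv⟩
      refine ⟨Pi.single j 1, ?_⟩
      rw [Matrix.mulVecLin_apply, hAcol j, hxs' j, hj]
    have hbij : Function.Bijective A.mulVecLin :=
      ⟨LinearMap.injective_iff_surjective.mpr hsurj, hsurj⟩
    have hUend : IsUnit (Matrix.toLinAlgEquiv' A : Module.End L (Fin n → L)) := by
      rw [Module.End.isUnit_iff]
      exact hbij
    have := hUend.map (Matrix.toLinAlgEquiv' (n := Fin n) (R := L)).symm
    simpa using this
  -- the cocycle identity for A
  have hmain : ∀ σ : L ≃ₐ[K] L, (c σ : Matrix (Fin n) (Fin n) L) * A.map σ = A := by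
    intro σ
    have hmapsum : A.map σ = ∑ τ : L ≃ₐ[K] L,
        ((c τ : Matrix (Fin n) (Fin n) L) * M.map τ).map σ := by
      rw [hA]; ext i j; simp only [Matrix.map_apply, Matrix.sum_apply, map_sum]
    rw [hmapsum, Finset.mul_sum]
    rw [hA]
    refine Fintype.sum_equiv (Equiv.mulLeft σ) _ _ fun τ => ?_
    rw [hmul σ, ← Matrix.mul_assoc, ← hc σ τ, Matrix.map_map]
    have h2 : (⇑σ ∘ ⇑τ) = ⇑(σ * τ) := by funext a; simp [AlgEquiv.mul_apply]
    rw [h2]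
    rfl
  -- conclude
  refine ⟨hAunit.unit, fun σ => ?_⟩
  have hone : ((1 : Matrix (Fin n) (Fin n) L)).map σ = 1 :=
    Matrix.map_one _ (map_zero σ) (map_one σ)
  have hinv : A * (↑hAunit.unit⁻¹ : Matrix (Fin n) (Fin n) L) = 1 := by
    have h := hAunit.unit.mul_inv
    rwa [hAunit.unit_spec] at h
  have hmapinv : A.map σ * ((↑hAunit.unit⁻¹ : Matrix (Fin n) (Fin n) L)).map σ = 1 := by
    rw [← hmul σ, hinv]
    exact hone
  calc (c σ : Matrix (Fin n) (Fin n) L)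
      = (c σ : Matrix (Fin n) (Fin n) L) * (A.map σ * ((↑hAunit.unit⁻¹ : Matrix (Fin n) (Fin n) L)).map σ) := by
        rw [hmapinv, mul_one]
    _ = ((c σ : Matrix (Fin n) (Fin n) L) * A.map σ) * ((↑hAunit.unit⁻¹ : Matrix (Fin n) (Fin n) L)).map σ := by
        rw [Matrix.mul_assoc]
    _ = (↑hAunit.unit : Matrix (Fin n) (Fin n) L) * ((↑hAunit.unit⁻¹ : Matrix (Fin n) (Fin n) L)).map σ := by
        rw [hmain σ, hAunit.unit_spec]
end
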